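/- For every multiple-closed set M of monomials in y_1,...,y_n there exists a finite Janet complete set J of monomials with M equal to the set of monomial multiples of J; i.e., M equals the disjoint union over m ∈ J of the cones Mon(μ(m,J))·m. -/

import Mathlib

/-- Janet multiplicative variables: for `m ∈ J` (monomials identified with
exponent vectors in `ℕⁿ`), the variable `k` is multiplicative for `m` iff the
exponent `m k` is maximal among the exponents `j k` of those `j ∈ J` agreeing
with `m` in all earlier positions. -/
def JanetMultiplicative (n : ℕ) (J : Finset (Fin n → ℕ)) (m : Fin n → ℕ)
    (k : Fin n) : Prop :=
  ∀ j ∈ J, (∀ l : Fin n, l < k → j l = m l) → j k ≤ m k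

/-- The Janet cone of `m` with respect to `J`: all products of `m` with
monomials involving only multiplicative variables of `m`. -/
def JanetCone (n : ℕ) (J : Finset (Fin n → ℕ)) (m : Fin n → ℕ) :
    Set (Fin n → ℕ) :=
  { x | ∃ r : Fin n → ℕ,
      (∀ k : Fin n, r k ≠ 0 → JanetMultiplicative n J m k) ∧ x = r + m }


/-!
By Dickson's lemma `M` has finitely many minimal elements, so they are all bounded by some `d`.
Take for `J` the elements of `M` below `d`. Every `x ∈ M` lies in the Janet cone of `x ⊓ d ∈ J`:
an index `k` with `x k > d k` has `(x ⊓ d) k = d k`, which is maximal over all of `J`. And for any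
`J` the Janet cones are disjoint: at the first index where two elements of `J` containing `x` in
their cones differ, the variable would have to be multiplicative for the smaller one.
-/
theorem WellQuasiOrderedLE.exists_bounded_generators {α : Type*} [PartialOrder α]
    [WellQuasiOrderedLE α] [IsDirectedOrder α] [Nonempty α] (M : Set α) :
    ∃ d, ∀ x ∈ M, ∃ g ∈ M, g ≤ x ∧ g ≤ d := by
  obtain ⟨d, hd⟩ := (WellQuasiOrderedLE.finite_of_isAntichain
    (setOfPred_minimal_antichain (· ∈ M))).bddAbove
  refine ⟨d, fun x hx => ?_⟩
  obtain ⟨g, hgx, hg⟩ := exists_minimal_le_of_wellFoundedLT (· ∈ M) x hx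
  exact ⟨g, hg.prop, hgx, hd hg⟩

namespace JanetCone

variable {n : ℕ} {J : Finset (Fin n → ℕ)} {m m' x : Fin n → ℕ}

theorem apply_le_apply_of_le (hx : x ∈ JanetCone n J m) (hm' : m' ∈ J) (hm'x : m' ≤ x)
    {k : Fin n} (hagree : ∀ l < k, m' l = m l) : m' k ≤ m k := by
  obtain ⟨r, hr, rfl⟩ := hx
  by_contra! hlt
  have hrk : r k ≠ 0 := by
    have := hm'x k
    simp only [Pi.add_apply] at this
    omega
  exact hlt.not_ge (hr k hrk m' hm' hagree)

theorem eq_of_mem_of_mem (hm : m ∈ J) (hm' : m' ∈ J) (hx : x ∈ JanetCone n J m)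
    (hx' : x ∈ JanetCone n J m') : m = m' := by
  have le_of_mem {m : Fin n → ℕ} (hx : x ∈ JanetCone n J m) : m ≤ x := by
    obtain ⟨r, -, rfl⟩ := hx
    exact le_add_self
  funext k
  induction k using WellFoundedLT.induction with
  | ind k ih =>
    exact le_antisymm (apply_le_apply_of_le hx' hm (le_of_mem hx) ih)
      (apply_le_apply_of_le hx hm' (le_of_mem hx') fun l hl => (ih l hl).symm)

theorem mem_inf_of_forall_le {d : Fin n → ℕ} (hJ : ∀ j ∈ J, j ≤ d) :
    x ∈ JanetCone n J (x ⊓ d) := by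
  refine ⟨x - x ⊓ d, fun k hk j hj _ => ?_, (tsub_add_cancel_of_le inf_le_left).symm⟩
  have hk : d k < x k := by
    simp only [Pi.sub_apply, Pi.inf_apply] at hk
    omega
  simpa [hk.le] using hJ j hj k

end JanetCone

/-- For every multiple-closed set `M` of monomials there is a finite Janet
complete set `J` whose set of monomial multiples equals `M`, i.e. `M` is the
disjoint union of the Janet cones of the elements of `J`: every element of `M`
lies in exactly one cone. -/
theorem exists_janet_complete_generating_set (n : ℕ) (M : Set (Fin n → ℕ))
    (hM : ∀ m ∈ M, ∀ r : Fin n → ℕ, r + m ∈ M) :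
    ∃ J : Finset (Fin n → ℕ),
      M = { x | ∃ g ∈ J, ∃ r : Fin n → ℕ, x = r + g } ∧
      (∀ x ∈ M, ∃! m, m ∈ J ∧ x ∈ JanetCone n J m) := by
  classical
  have mem_of_le {g x} (hg : g ∈ M) (hgx : g ≤ x) : x ∈ M :=
    tsub_add_cancel_of_le hgx ▸ hM g hg (x - g)
  obtain ⟨d, hd⟩ := WellQuasiOrderedLE.exists_bounded_generators M
  let J := (Finset.Iic d).filter (· ∈ M)
  have hJ : ∀ j ∈ J, j ≤ d := fun j hj => Finset.mem_Iic.1 (Finset.mem_filter.1 hj).1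
  have inf_mem : ∀ x ∈ M, x ⊓ d ∈ J := fun x hx => by
    obtain ⟨g, hg, hgx, hgd⟩ := hd x hx
    exact Finset.mem_filter.2 ⟨Finset.mem_Iic.2 inf_le_right, mem_of_le hg (le_inf hgx hgd)⟩
  refine ⟨J, Set.ext fun x => ⟨fun hx => ?_, ?_⟩, fun x hx => ?_⟩
  · exact ⟨x ⊓ d, inf_mem x hx, x - x ⊓ d, (tsub_add_cancel_of_le inf_le_left).symm⟩
  · rintro ⟨g, hg, r, rfl⟩
    exact hM g (Finset.mem_filter.1 hg).2 r
  · refine ⟨x ⊓ d, ⟨inf_mem x hx, JanetCone.mem_inf_of_forall_le hJ⟩, fun m ⟨hm, hxm⟩ => ?_⟩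
    exact JanetCone.eq_of_mem_of_mem hm (inf_mem x hx) hxm (JanetCone.mem_inf_of_forall_le hJ)
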